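/- For every natural number n and q > 0, the analytic continuation of the alternating Hurwitz zeta function satisfies ζ_E(-n, q) = (1/2) E_n(q), where E_n is the n-th Euler polynomial. In particular ζ_E(0, q) = 1/2. -/

import Mathlib

/-- The `n`-th Euler polynomial, defined via the recurrence coming from the
generating function `2 e^{xt}/(e^t + 1) = ∑ E_n(x) t^n/n!`. -/
noncomputable def eulerPoly : ℕ → ℝ → ℝ
  | n => fun x => x ^ n - (1/2) *
      ∑ k ∈ (Finset.range n).attach, (n.choose k.1 : ℝ) * eulerPoly k.1 x
  termination_by n => n
  decreasing_by exact Finset.mem_range.mp k.2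

/-!
Write `D_N(s, x) = Δ^N (x ↦ x^{-s})` for the `N`-th forward difference with step `1`.
Summing the alternating series by parts `N` times gives, for `Re s > 1`,
`ζ_E(s, q) = ½ ∑_{m<N} (-½)^m D_m(s, q) + (-½)^N ∑_k (-1)^k D_N(s, k + q)`.
By the mean value theorem `D_N(s, x) = O(x^{-Re s - N})` locally uniformly in `s`, so the right
side is holomorphic on `Re s > 1 - N` and is the continuation there. At `s = -n` with `n < N`,
`D_N(-n, ·)` is the `N`-th difference of a polynomial of degree `n` and vanishes, which leaves
`½ ∑_{m ≤ n} (-½)^m Δ^m (x ↦ x^n)` at `q`: the classical formula for `E_n(q) / 2`.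
-/

open Finset fwdDiff Complex

lemma eulerPoly_eq_sub_sum (n : ℕ) (x : ℝ) :
    eulerPoly n x = x ^ n - 1 / 2 * ∑ k ∈ range n, (n.choose k : ℝ) * eulerPoly k x := by
  rw [eulerPoly]
  dsimp only
  rw [sum_attach (range n) fun k ↦ (n.choose k : ℝ) * eulerPoly k x]

lemma eulerPoly_zero (x : ℝ) : eulerPoly 0 x = 1 := by
  rw [eulerPoly_eq_sub_sum]
  simp

section fwdDiff

variable {M G : Type*} [AddCommMonoid M] [AddCommGroup G]

lemma fwdDiff_iter_addMonoidHom_comp {G' : Type*} [AddCommGroup G'] (φ : G →+ G') (h : M)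
    (f : M → G) (N : ℕ) : Δ_[h] ^[N] (φ ∘ f) = φ ∘ Δ_[h] ^[N] f := by
  funext y
  simp [fwdDiff_iter_eq_sum_shift, map_sum, map_zsmul]

lemma fwdDiff_iter_apply_add (h : M) (f : M → G) (N : ℕ) (y : M) :
    Δ_[h] ^[N] f (y + h) = Δ_[h] ^[N] f y + Δ_[h] ^[N + 1] f y := by
  rw [Function.iterate_succ_apply', fwdDiff, add_sub_cancel]

/-- On functions killed by some `Δ^N`, the operator `f ↦ f + f (· + h) = 2 + Δ` is inverted by
the geometric series `½ ∑ (-Δ/2)^m`. -/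
lemma sum_fwdDiff_iter_add_sum_fwdDiff_iter_add {K : Type*} [Field K] [NeZero (2 : K)]
    (h : M) {f : M → K} {N : ℕ} (hf : Δ_[h] ^[N] f = 0) (x : M) :
    ∑ m ∈ range N, (-1 / 2 : K) ^ m * Δ_[h] ^[m] f x
      + ∑ m ∈ range N, (-1 / 2 : K) ^ m * Δ_[h] ^[m] f (x + h) = 2 * f x := by
  have h2 : (2 : K) ≠ 0 := two_ne_zero
  have htel := sum_range_sub (fun m ↦ (-1 / 2 : K) ^ m * Δ_[h] ^[m] f x) N
  simp only [hf, Pi.zero_apply, mul_zero, Function.iterate_zero, id_eq, pow_zero, one_mul,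
    zero_sub] at htel
  rw [← sum_add_distrib]
  calc _ = ∑ m ∈ range N, (-2) * ((-1 / 2 : K) ^ (m + 1) * Δ_[h] ^[m + 1] f x
        - (-1 / 2 : K) ^ m * Δ_[h] ^[m] f x) := sum_congr rfl fun m _ ↦ by
          rw [fwdDiff_iter_apply_add, pow_succ]; field_simp; ring
    _ = 2 * f x := by rw [← mul_sum, htel]; ring

end fwdDiff

lemma fwdDiff_iter_pow_apply_add_one {R : Type*} [CommRing R] (n m : ℕ) (x : R) :
    Δ_[1] ^[m] (fun y ↦ y ^ n) (x + 1)
      = ∑ k ∈ range (n + 1), (n.choose k : R) * Δ_[1] ^[m] (fun y ↦ y ^ k) x := by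
  have hbinom : (fun y : R ↦ (y + 1) ^ n)
      = ∑ k ∈ range (n + 1), (n.choose k : R) • fun y ↦ y ^ k := by
    funext y
    simp [add_pow, mul_comm]
  rw [← fwdDiff_iter_comp_add, hbinom, fwdDiff_iter_finsetSum, Finset.sum_apply]
  simp [fwdDiff_iter_const_smul]

theorem eulerPoly_eq_sum_fwdDiff_iter {n N : ℕ} (hn : n < N) (x : ℝ) :
    eulerPoly n x = ∑ m ∈ range N, (-1 / 2 : ℝ) ^ m * Δ_[1] ^[m] (fun y ↦ y ^ n) x := by
  induction n using Nat.strong_induction_on with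
  | _ n ih =>
    set e : ℕ → ℝ → ℝ := fun k x ↦
      ∑ m ∈ range N, (-1 / 2 : ℝ) ^ m * Δ_[1] ^[m] (fun y ↦ y ^ k) x
    have hshift : e n (x + 1) = ∑ k ∈ range (n + 1), (n.choose k : ℝ) * e k x := by
      simp only [e, fwdDiff_iter_pow_apply_add_one, mul_sum]
      rw [sum_comm]
      exact sum_congr rfl fun k _ ↦ sum_congr rfl fun m _ ↦ by ring
    have hsum : e n x + e n (x + 1) = 2 * x ^ n :=
      sum_fwdDiff_iter_add_sum_fwdDiff_iter_add 1 (fwdDiff_iter_pow_eq_zero_of_lt hn) x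
    have hlower : ∑ k ∈ range n, (n.choose k : ℝ) * eulerPoly k x
        = ∑ k ∈ range n, (n.choose k : ℝ) * e k x :=
      sum_congr rfl fun k hk ↦ by rw [ih k (mem_range.mp hk) (by have := mem_range.mp hk; omega)]
    rw [sum_range_succ, Nat.choose_self, Nat.cast_one, one_mul] at hshift
    change eulerPoly n x = e n x
    rw [eulerPoly_eq_sub_sum, hlower]
    linarith

lemma tsum_neg_one_pow_mul_sub {R : Type*} [Ring R] [TopologicalSpace R] [IsTopologicalRing R]
    [T2Space R] {g : ℕ → R} (hg : Summable fun k ↦ (-1 : R) ^ k * g k) :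
    ∑' k, (-1 : R) ^ k * (g (k + 1) - g k) = g 0 - 2 * ∑' k, (-1 : R) ^ k * g k := by
  have hshift : Summable fun k ↦ (-1 : R) ^ k * g (k + 1) := by
    simpa [pow_succ] using ((summable_nat_add_iff 1).mpr hg).neg
  have h0 := hg.tsum_eq_zero_add
  simp only [pow_succ, mul_neg_one, neg_mul, tsum_neg, pow_zero, one_mul] at h0
  simp only [mul_sub]
  rw [hshift.tsum_sub hg, h0]
  noncomm_ring

lemma HasDerivAt.fwdDiff_iter {E : Type*} [NormedAddCommGroup E] [NormedSpace ℝ E]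
    {f f' : ℝ → E} {a h : ℝ} (hh : 0 ≤ h) (hf : ∀ x, a < x → HasDerivAt f (f' x) x)
    (N : ℕ) : ∀ x, a < x → HasDerivAt (Δ_[h] ^[N] f) (Δ_[h] ^[N] f' x) x := by
  induction N with
  | zero => exact hf
  | succ N ih =>
    intro x hx
    simp only [Function.iterate_succ_apply']
    exact ((ih (x + h) (by linarith)).comp_add_const x h).sub (ih x hx)

lemma norm_fwdDiff_le_of_norm_deriv_le {E : Type*} [NormedAddCommGroup E] [NormedSpace ℝ E]
    {f f' : ℝ → E} {x C : ℝ} (hf : ∀ y ∈ Set.Icc x (x + 1), HasDerivAt f (f' y) y)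
    (hC : ∀ y ∈ Set.Icc x (x + 1), ‖f' y‖ ≤ C) : ‖Δ_[1] f x‖ ≤ C := by
  have := norm_image_sub_le_of_norm_deriv_le_segment' (fun y hy ↦ (hf y hy).hasDerivWithinAt)
    (fun y hy ↦ hC y (Set.Ico_subset_Icc_self hy)) (x + 1) (Set.right_mem_Icc.mpr (by linarith))
  simpa [fwdDiff] using this

lemma eqOn_re_gt_of_eqOn {f g : ℂ → ℂ} {a b : ℝ} (hab : a ≤ b)
    (hf : DifferentiableOn ℂ f {s | a < s.re}) (hg : DifferentiableOn ℂ g {s | a < s.re})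
    (hfg : ∀ s : ℂ, b < s.re → f s = g s) : Set.EqOn f g {s | a < s.re} := by
  have hopen (c : ℝ) : IsOpen {s : ℂ | c < s.re} := isOpen_lt continuous_const continuous_re
  have hb : ((b + 1 : ℝ) : ℂ) ∈ {s : ℂ | b < s.re} := by simp
  refine (hf.analyticOnNhd (hopen a)).eqOn_of_preconnected_of_eventuallyEq
    (hg.analyticOnNhd (hopen a)) (convex_halfSpace_re_gt a).isPreconnected
    (by simpa using hab.trans_lt (lt_add_one b))
    (Filter.eventuallyEq_of_mem ((hopen b).mem_nhds hb) hfg)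

lemma rpow_neg_le_add_of_mem_Icc {y a b t : ℝ} (hy : 0 < y) (hat : a ≤ t) (htb : t ≤ b) :
    y ^ (-t) ≤ y ^ (-a) + y ^ (-b) := by
  rcases le_total 1 y with h1 | h1
  · have := Real.rpow_le_rpow_of_exponent_le h1 (neg_le_neg hat)
    linarith [Real.rpow_nonneg hy.le (-b)]
  · have := Real.rpow_le_rpow_of_exponent_ge hy h1 (neg_le_neg htb)
    linarith [Real.rpow_nonneg hy.le (-a)]

lemma summable_nat_add_rpow_neg {q a : ℝ} (hq : 0 < q) (ha : 1 < a) :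
    Summable fun k : ℕ ↦ ((k : ℝ) + q) ^ (-a) := by
  refine ((Real.summable_one_div_nat_add_rpow q a).mpr ha).congr fun k ↦ ?_
  rw [abs_of_pos (by positivity), one_div, Real.rpow_neg (by positivity)]

lemma hasDerivAt_ofReal_cpow_neg (s : ℂ) {x : ℝ} (hx : 0 < x) :
    HasDerivAt (fun y : ℝ ↦ (y : ℂ) ^ (-s)) (-s * (x : ℂ) ^ (-(s + 1))) x := by
  have := ((hasDerivAt_id (x : ℂ)).cpow_const (c := -s) (ofReal_mem_slitPlane.mpr hx)).comp_ofReal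
  simpa [neg_add_eq_sub] using this

noncomputable def cpowFwdDiff (N : ℕ) (s : ℂ) : ℝ → ℂ :=
  Δ_[1] ^[N] fun x : ℝ ↦ (x : ℂ) ^ (-s)

lemma cpowFwdDiff_succ_apply (N : ℕ) (s : ℂ) (x : ℝ) :
    cpowFwdDiff (N + 1) s x = cpowFwdDiff N s (x + 1) - cpowFwdDiff N s x := by
  rw [cpowFwdDiff, Function.iterate_succ_apply', fwdDiff, cpowFwdDiff]

lemma cpowFwdDiff_neg_natCast (m n : ℕ) (x : ℝ) :
    cpowFwdDiff m (-n) x = ((Δ_[1] ^[m] (fun y : ℝ ↦ y ^ n) x : ℝ) : ℂ) := by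
  have hcomp : (fun y : ℝ ↦ (y : ℂ) ^ (-(-(n : ℂ))))
      = ofRealHom.toAddMonoidHom ∘ fun y ↦ y ^ n := by
    funext y
    simp
  rw [cpowFwdDiff, hcomp, fwdDiff_iter_addMonoidHom_comp]
  rfl

lemma hasDerivAt_cpowFwdDiff (N : ℕ) (s : ℂ) {x : ℝ} (hx : 0 < x) :
    HasDerivAt (cpowFwdDiff N s) (-s * cpowFwdDiff N (s + 1) x) x := by
  have h := HasDerivAt.fwdDiff_iter zero_le_one
    (fun y hy ↦ hasDerivAt_ofReal_cpow_neg s hy) N x hx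
  have hsmul : (fun y : ℝ ↦ -s * (y : ℂ) ^ (-(s + 1)))
      = (-s) • fun y : ℝ ↦ (y : ℂ) ^ (-(s + 1)) := rfl
  rwa [hsmul, fwdDiff_iter_const_smul] at h

lemma norm_cpowFwdDiff_le (N : ℕ) {s : ℂ} (hs : 0 ≤ s.re + N) {x : ℝ} (hx : 0 < x) :
    ‖cpowFwdDiff N s x‖ ≤ (‖s‖ + N) ^ N * x ^ (-(s.re + N)) := by
  induction N generalizing s x with
  | zero => simp [cpowFwdDiff, norm_cpow_eq_rpow_re_of_pos hx]
  | succ N ih =>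
    push_cast at hs ⊢
    rw [cpowFwdDiff_succ_apply]
    refine norm_fwdDiff_le_of_norm_deriv_le
      (fun y hy ↦ hasDerivAt_cpowFwdDiff N s (hx.trans_le hy.1)) fun y hxy ↦ ?_
    have hy : 0 < y := hx.trans_le hxy.1
    have h1 := ih (s := s + 1) (by rw [add_re, one_re]; linarith) hy
    have hnorm : ‖s + 1‖ ≤ ‖s‖ + 1 := by simpa using norm_add_le s 1
    have hrpow : y ^ (-((s + 1).re + N)) ≤ x ^ (-(s.re + (N + 1))) := by
      rw [add_re, one_re, show s.re + 1 + N = s.re + (N + 1) by ring]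
      exact Real.rpow_le_rpow_of_nonpos hx hxy.1 (by linarith)
    calc ‖-s * cpowFwdDiff N (s + 1) y‖
        ≤ ‖s‖ * ((‖s + 1‖ + N) ^ N * y ^ (-((s + 1).re + N))) := by
          rw [norm_mul, norm_neg]; gcongr
      _ ≤ (‖s‖ + (N + 1)) * ((‖s‖ + (N + 1)) ^ N * x ^ (-(s.re + (N + 1)))) := by
          have hbase : ‖s + 1‖ + N ≤ ‖s‖ + (N + 1) := by linarith
          gcongr ?_ * (?_ ^ N * ?_)
          linarith
      _ = (‖s‖ + (N + 1)) ^ (N + 1) * x ^ (-(s.re + (N + 1))) := by ring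

lemma differentiable_cpowFwdDiff_apply (N : ℕ) {x : ℝ} (hx : 0 < x) :
    Differentiable ℂ fun s ↦ cpowFwdDiff N s x := by
  simp only [cpowFwdDiff, fwdDiff_iter_eq_sum_shift, zsmul_eq_mul]
  refine Differentiable.fun_sum fun k _ ↦ Differentiable.const_mul ?_ _
  refine differentiable_neg.const_cpow (Or.inl ?_)
  rw [ofReal_ne_zero]
  positivity

noncomputable def cpowFwdDiffAltSum (q : ℝ) (N : ℕ) (s : ℂ) : ℂ :=
  ∑' k : ℕ, (-1 : ℂ) ^ k * cpowFwdDiff N s (k + q)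

section cpowFwdDiffAltSum

variable {q : ℝ}

lemma cpowFwdDiffAltSum_zero_apply (s : ℂ) :
    cpowFwdDiffAltSum q 0 s = ∑' k : ℕ, (-1 : ℂ) ^ k / ((k : ℂ) + (q : ℂ)) ^ s := by
  refine tsum_congr fun k ↦ ?_
  simp [cpowFwdDiff, cpow_neg, div_eq_mul_inv]

lemma cpowFwdDiffAltSum_neg_natCast {n N : ℕ} (h : n < N) :
    cpowFwdDiffAltSum q N (-n) = 0 := by
  simp [cpowFwdDiffAltSum, cpowFwdDiff_neg_natCast, fwdDiff_iter_pow_eq_zero_of_lt h]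

lemma summable_cpowFwdDiffAltSum (hq : 0 < q) {N : ℕ} {s : ℂ} (hs : 1 < s.re + N) :
    Summable fun k : ℕ ↦ (-1 : ℂ) ^ k * cpowFwdDiff N s (k + q) := by
  refine Summable.of_norm_bounded
    ((summable_nat_add_rpow_neg hq hs).mul_left ((‖s‖ + N) ^ N)) fun k ↦ ?_
  rw [norm_mul, norm_pow, norm_neg, norm_one, one_pow, one_mul]
  exact norm_cpowFwdDiff_le N (by linarith) (by positivity)

lemma cpowFwdDiffAltSum_succ (hq : 0 < q) {N : ℕ} {s : ℂ} (hs : 1 < s.re + N) :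
    cpowFwdDiffAltSum q (N + 1) s = cpowFwdDiff N s q - 2 * cpowFwdDiffAltSum q N s := by
  have h := tsum_neg_one_pow_mul_sub (summable_cpowFwdDiffAltSum hq hs)
  simp only [Nat.cast_zero, zero_add] at h
  rw [cpowFwdDiffAltSum, cpowFwdDiffAltSum, ← h]
  refine tsum_congr fun k ↦ ?_
  rw [cpowFwdDiff_succ_apply, Nat.cast_succ, add_right_comm]

lemma cpowFwdDiffAltSum_zero_eq (hq : 0 < q) {s : ℂ} (hs : 1 < s.re) (N : ℕ) :
    cpowFwdDiffAltSum q 0 s = (∑ m ∈ range N, (-1 / 2 : ℂ) ^ m * cpowFwdDiff m s q) / 2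
      + (-1 / 2 : ℂ) ^ N * cpowFwdDiffAltSum q N s := by
  induction N with
  | zero => simp
  | succ N ih =>
    rw [ih, cpowFwdDiffAltSum_succ hq (by linarith [(N.cast_nonneg : (0 : ℝ) ≤ N)]),
      sum_range_succ]
    ring

lemma differentiableOn_cpowFwdDiffAltSum (hq : 0 < q) (N : ℕ) :
    DifferentiableOn ℂ (cpowFwdDiffAltSum q N) {s | 1 - N < s.re} := by
  intro s₀ hs₀
  have hs₀' : 1 - N < s₀.re := hs₀
  set r := (s₀.re + N - 1) / 2 with hr_def
  have hr : 0 < r := by linarith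
  have hbound : ∀ (k : ℕ), ∀ w ∈ Metric.ball s₀ r,
      ‖(-1 : ℂ) ^ k * cpowFwdDiff N w (k + q)‖ ≤ (‖s₀‖ + r + N) ^ N
        * (((k : ℝ) + q) ^ (-(s₀.re + N - r)) + ((k : ℝ) + q) ^ (-(s₀.re + N + r))) := by
    intro k w hw
    have hdist : ‖w - s₀‖ < r := by rwa [← dist_eq_norm]
    have hre : |w.re - s₀.re| < r := (abs_re_le_norm (w - s₀)).trans_lt hdist
    have hnorm : ‖w‖ ≤ ‖s₀‖ + r := by linarith [norm_le_norm_add_norm_sub' w s₀]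
    rw [abs_lt] at hre
    rw [norm_mul, norm_pow, norm_neg, norm_one, one_pow, one_mul]
    refine (norm_cpowFwdDiff_le N (by linarith) (by positivity)).trans ?_
    gcongr
    exact rpow_neg_le_add_of_mem_Icc (by positivity) (by linarith) (by linarith)
  have hsum := ((summable_nat_add_rpow_neg hq (a := s₀.re + N - r) (by linarith)).add
    (summable_nat_add_rpow_neg hq (a := s₀.re + N + r) (by linarith))).mul_left
      ((‖s₀‖ + r + N) ^ N)
  have hdiff := differentiableOn_tsum_of_summable_norm hsum
    (fun k ↦ ((differentiable_cpowFwdDiff_apply N (by positivity)).const_mul _).differentiableOn)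
    Metric.isOpen_ball hbound
  exact (hdiff.differentiableAt (Metric.ball_mem_nhds s₀ hr)).differentiableWithinAt

end cpowFwdDiffAltSum

theorem zetaE_neg_nat (q : ℝ) (hq : 0 < q) (F : ℂ → ℂ) (hF : Differentiable ℂ F)
    (hagree : ∀ z : ℂ, 1 < z.re → F z = ∑' k : ℕ, (-1 : ℂ) ^ k / ((k : ℂ) + (q : ℂ)) ^ z) :
    (∀ n : ℕ, F (-(n : ℂ)) = ((eulerPoly n q : ℝ) : ℂ) / 2) ∧ F 0 = 1/2 := by
  have key : ∀ n : ℕ, F (-(n : ℂ)) = ((eulerPoly n q : ℝ) : ℂ) / 2 := by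
    intro n
    -- `N = n + 2` puts `-n` in the half-plane `1 - N < re s` and makes `Δ^N` kill `x ^ n`.
    set N := n + 2
    set G : ℂ → ℂ := fun s ↦ (∑ m ∈ range N, (-1 / 2 : ℂ) ^ m * cpowFwdDiff m s q) / 2
      + (-1 / 2 : ℂ) ^ N * cpowFwdDiffAltSum q N s
    have hG : DifferentiableOn ℂ G {s | 1 - N < s.re} :=
      ((Differentiable.fun_sum fun m _ ↦
        (differentiable_cpowFwdDiff_apply m hq).const_mul _).div_const _ |>.differentiableOn).add
        ((differentiableOn_cpowFwdDiffAltSum hq N).const_mul _)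
    have hFG : Set.EqOn F G {s | 1 - N < s.re} :=
      eqOn_re_gt_of_eqOn (b := 1) (by simp) hF.differentiableOn hG fun s hs ↦ by
        rw [hagree s hs, ← cpowFwdDiffAltSum_zero_apply, cpowFwdDiffAltSum_zero_eq hq hs N]
    rw [hFG (by simp only [Set.mem_ofPred_eq, neg_re, natCast_re, N]; push_cast; linarith)]
    simp only [G, cpowFwdDiffAltSum_neg_natCast (by omega : n < N), mul_zero, add_zero,
      cpowFwdDiff_neg_natCast, eulerPoly_eq_sum_fwdDiff_iter (by omega : n < N)]
    push_cast
    rfl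
  exact ⟨key, by simpa [eulerPoly_zero] using key 0⟩
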